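/- arXiv:2302.07653 — 4 statements merged into one kernel-verified Lean document; each statement's English description precedes it below -/
import Mathlib

section
/- Let A₁, A₂, A₃ be three pairwise distinct points of ℝ³ (the model of Nil geometry). Then the interior angle sum of the Nil translation triangle with vertices A₁, A₂, A₃ satisfies ω(A₁;A₂,A₃) + ω(A₂;A₁,A₃) + ω(A₃;A₁,A₂) ≥ π. -/
noncomputable section

open Real

/-- The Nil translation tangent vector `t(P,Q)`: the initial tangent vector at the origin
of the Nil translation curve from the origin to the image of `Q` under the Nil translation
carrying `P` to the origin. -/
def nilT (P Q : ℝ × ℝ × ℝ) : ℝ × ℝ × ℝ :=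
  (Q.1 - P.1, Q.2.1 - P.2.1,
   Q.2.2 - P.2.2 + P.1 * (P.2.1 - Q.2.1) - (Q.1 - P.1) * (Q.2.1 - P.2.1) / 2)

/-- Euclidean dot product on ℝ³. -/
def dot3 (u v : ℝ × ℝ × ℝ) : ℝ := u.1 * v.1 + u.2.1 * v.2.1 + u.2.2 * v.2.2

/-- Euclidean norm on ℝ³. -/
def norm3 (u : ℝ × ℝ × ℝ) : ℝ := Real.sqrt (dot3 u u)

/-- The interior angle of a Nil translation triangle at the vertex `P`,
the other two vertices being `Q` and `R`. -/
def nilAngle (P Q R : ℝ × ℝ × ℝ) : ℝ :=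
  Real.arccos (dot3 (nilT P Q) (nilT P R) / (norm3 (nilT P Q) * norm3 (nilT P R)))

section Aux

open InnerProductGeometry RealInnerProductSpace

variable {V : Type*} [NormedAddCommGroup V] [InnerProductSpace ℝ V]

/-- `arccos` is antitone. -/
lemma my_arccos_le_arccos {s t : ℝ} (h : s ≤ t) : Real.arccos t ≤ Real.arccos s := by
  rw [Real.arccos_eq_pi_div_two_sub_arcsin, Real.arccos_eq_pi_div_two_sub_arcsin]
  have := Real.monotone_arcsin h
  linarith

/-- Triangle inequality for angles between unit vectors. -/
lemma angle_triangle_unit {x y z : V} (hx : ‖x‖ = 1) (hy : ‖y‖ = 1) (hz : ‖z‖ = 1) :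
    angle x z ≤ angle x y + angle y z := by
  by_cases hπ : angle x y + angle y z ≤ π
  swap
  · linarith [angle_le_pi x z]
  have hin : ∀ u v : V, ‖u‖ = 1 → ‖v‖ = 1 → |(inner ℝ u v : ℝ)| ≤ 1 := by
    intro u v hu hv
    have := abs_real_inner_le_norm u v
    rw [hu, hv] at this; simpa using this
  have hxy := abs_le.mp (hin x y hx hy)
  have hyz := abs_le.mp (hin y z hy hz)
  have hα : angle x y = Real.arccos (inner ℝ x y : ℝ) := by rw [angle, hx, hy]; norm_num
  have hβ : angle y z = Real.arccos (inner ℝ y z : ℝ) := by rw [angle, hy, hz]; norm_num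
  have hγ : angle x z = Real.arccos (inner ℝ x z : ℝ) := by rw [angle, hx, hz]; norm_num
  have hcosα : Real.cos (angle x y) = (inner ℝ x y : ℝ) := by
    rw [hα, Real.cos_arccos hxy.1 hxy.2]
  have hcosβ : Real.cos (angle y z) = (inner ℝ y z : ℝ) := by
    rw [hβ, Real.cos_arccos hyz.1 hyz.2]
  have hsinα : Real.sin (angle x y) = Real.sqrt (1 - (inner ℝ x y : ℝ) ^ 2) := by
    rw [hα, Real.sin_arccos]
  have hsinβ : Real.sin (angle y z) = Real.sqrt (1 - (inner ℝ y z : ℝ) ^ 2) := by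
    rw [hβ, Real.sin_arccos]
  -- Cauchy-Schwarz applied to the components of `x` and `z` orthogonal to `y`
  have key : (inner ℝ x y : ℝ) * (inner ℝ y z : ℝ) -
      Real.sqrt (1 - (inner ℝ x y : ℝ) ^ 2) * Real.sqrt (1 - (inner ℝ y z : ℝ) ^ 2)
      ≤ (inner ℝ x z : ℝ) := by
    set p : V := x - (inner ℝ x y : ℝ) • y with hp
    set q : V := z - (inner ℝ y z : ℝ) • y with hq
    have hyy : (inner ℝ y y : ℝ) = 1 := by
      rw [real_inner_self_eq_norm_mul_norm, hy]; norm_num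
    have hpq : (inner ℝ p q : ℝ) = (inner ℝ x z : ℝ) - (inner ℝ x y : ℝ) * (inner ℝ y z : ℝ) := by
      simp only [hp, hq, inner_sub_left, inner_sub_right, real_inner_smul_left,
        real_inner_smul_right, hyy, real_inner_comm y x]
      ring
    have hpp : (inner ℝ p p : ℝ) = 1 - (inner ℝ x y : ℝ) ^ 2 := by
      simp only [hp, inner_sub_left, inner_sub_right, real_inner_smul_left,
        real_inner_smul_right, hyy, real_inner_comm y x]
      rw [real_inner_self_eq_norm_mul_norm, hx]
      ring
    have hqq : (inner ℝ q q : ℝ) = 1 - (inner ℝ y z : ℝ) ^ 2 := by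
      simp only [hq, inner_sub_left, inner_sub_right, real_inner_smul_left,
        real_inner_smul_right, hyy, real_inner_comm z y]
      rw [real_inner_self_eq_norm_mul_norm, hz]
      ring
    have hnp : ‖p‖ = Real.sqrt (1 - (inner ℝ x y : ℝ) ^ 2) := by
      rw [← hpp, real_inner_self_eq_norm_mul_norm, Real.sqrt_mul_self (norm_nonneg p)]
    have hnq : ‖q‖ = Real.sqrt (1 - (inner ℝ y z : ℝ) ^ 2) := by
      rw [← hqq, real_inner_self_eq_norm_mul_norm, Real.sqrt_mul_self (norm_nonneg q)]
    have hcs := abs_real_inner_le_norm p q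
    rw [hpq, hnp, hnq] at hcs
    have := abs_le.mp hcs
    linarith [this.1]
  have hcos : Real.cos (angle x y + angle y z) ≤ (inner ℝ x z : ℝ) := by
    rw [Real.cos_add, hcosα, hcosβ, hsinα, hsinβ]
    exact key
  rw [hγ]
  calc Real.arccos (inner ℝ x z : ℝ) ≤ Real.arccos (Real.cos (angle x y + angle y z)) :=
        my_arccos_le_arccos hcos
    _ = angle x y + angle y z :=
        Real.arccos_cos (add_nonneg (angle_nonneg x y) (angle_nonneg y z)) hπ

/-- Triangle inequality for angles between nonzero vectors. -/
lemma angle_triangle' {x y z : V} (hx : x ≠ 0) (hy : y ≠ 0) (hz : z ≠ 0) :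
    angle x z ≤ angle x y + angle y z := by
  have hx' : (0:ℝ) < ‖x‖⁻¹ := inv_pos.mpr (norm_pos_iff.mpr hx)
  have hy' : (0:ℝ) < ‖y‖⁻¹ := inv_pos.mpr (norm_pos_iff.mpr hy)
  have hz' : (0:ℝ) < ‖z‖⁻¹ := inv_pos.mpr (norm_pos_iff.mpr hz)
  have nx : ‖(‖x‖⁻¹ • x)‖ = 1 := norm_smul_inv_norm hx
  have ny : ‖(‖y‖⁻¹ • y)‖ = 1 := norm_smul_inv_norm hy
  have nz : ‖(‖z‖⁻¹ • z)‖ = 1 := norm_smul_inv_norm hz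
  have h := angle_triangle_unit nx ny nz
  rwa [angle_smul_left_of_pos _ _ hx', angle_smul_right_of_pos _ _ hz',
    angle_smul_right_of_pos _ _ hy', angle_smul_left_of_pos _ _ hy',
    angle_smul_left_of_pos _ _ hx', angle_smul_right_of_pos _ _ hz'] at h

/-- The key angle inequality: for nonzero `u v w`,
`angle u (-w) + angle (-u) v + angle w (-v) ≥ π`. -/
lemma angle_sum_key {u v w : V} (hu : u ≠ 0) (hv : v ≠ 0) (hw : w ≠ 0) :
    π ≤ angle u (-w) + angle (-u) v + angle w (-v) := by
  have h := angle_triangle' (x := -u) (y := v) (z := -w) (neg_ne_zero.mpr hu) hv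
    (neg_ne_zero.mpr hw)
  rw [InnerProductGeometry.angle_neg_neg] at h
  have h1 : InnerProductGeometry.angle u w = π - InnerProductGeometry.angle u (-w) := by
    rw [InnerProductGeometry.angle_neg_right]; ring
  have h2 : InnerProductGeometry.angle v (-w) = InnerProductGeometry.angle w (-v) := by
    rw [InnerProductGeometry.angle_neg_right, InnerProductGeometry.angle_neg_right,
      InnerProductGeometry.angle_comm]
  rw [h1, h2] at h
  linarith

end Aux

section Transfer

open InnerProductGeometry RealInnerProductSpace

/-- Embedding of `ℝ × ℝ × ℝ` into `EuclideanSpace ℝ (Fin 3)`. -/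
def toE3 (u : ℝ × ℝ × ℝ) : EuclideanSpace ℝ (Fin 3) := WithLp.toLp 2 ![u.1, u.2.1, u.2.2]

lemma toE3_inner (u v : ℝ × ℝ × ℝ) : (inner ℝ (toE3 u) (toE3 v) : ℝ) = dot3 u v := by
  simp [toE3, dot3, PiLp.inner_apply, Fin.sum_univ_three]
  ring

lemma toE3_norm (u : ℝ × ℝ × ℝ) : ‖toE3 u‖ = norm3 u := by
  rw [norm3, ← toE3_inner u u, real_inner_self_eq_norm_mul_norm,
    Real.sqrt_mul_self (norm_nonneg _)]

lemma toE3_neg (u : ℝ × ℝ × ℝ) : toE3 (-u) = -toE3 u := by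
  ext i
  fin_cases i <;> simp [toE3]

lemma nilAngle_eq (P Q R : ℝ × ℝ × ℝ) :
    nilAngle P Q R = angle (toE3 (nilT P Q)) (toE3 (nilT P R)) := by
  rw [nilAngle, angle, toE3_inner, toE3_norm, toE3_norm]

lemma nilT_neg (P Q : ℝ × ℝ × ℝ) : nilT Q P = -nilT P Q := by
  simp only [nilT, Prod.neg_mk, Prod.mk.injEq]
  refine ⟨by ring, by ring, by ring⟩

lemma nilT_ne_zero {P Q : ℝ × ℝ × ℝ} (h : P ≠ Q) : nilT P Q ≠ 0 := by
  intro hc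
  apply h
  have h1 : Q.1 - P.1 = 0 := congrArg Prod.fst hc
  have h2 : Q.2.1 - P.2.1 = 0 := congrArg (fun x => x.2.1) hc
  have h3 : Q.2.2 - P.2.2 + P.1 * (P.2.1 - Q.2.1) - (Q.1 - P.1) * (Q.2.1 - P.2.1) / 2 = 0 :=
    congrArg (fun x => x.2.2) hc
  have e1 : P.1 = Q.1 := by linarith
  have e2 : P.2.1 = Q.2.1 := by linarith
  have e3 : P.2.2 = Q.2.2 := by
    rw [← e1, ← e2] at h3; simp at h3; linarith
  exact Prod.ext e1 (Prod.ext e2 e3)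

lemma toE3_ne_zero {u : ℝ × ℝ × ℝ} (h : u ≠ 0) : toE3 u ≠ 0 := by
  intro hc
  apply h
  have h1 : toE3 u 0 = 0 := by rw [hc]; rfl
  have h2 : toE3 u 1 = 0 := by rw [hc]; rfl
  have h3 : toE3 u 2 = 0 := by rw [hc]; rfl
  simp [toE3] at h1 h2 h3
  exact Prod.ext h1 (Prod.ext h2 h3)

end Transfer

/-- The interior angle sum of a Nil translation triangle is at least π. -/
theorem nil_translation_triangle_angle_sum_ge_pi
    (A₁ A₂ A₃ : ℝ × ℝ × ℝ) (h12 : A₁ ≠ A₂) (h13 : A₁ ≠ A₃) (h23 : A₂ ≠ A₃) :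
    nilAngle A₁ A₂ A₃ + nilAngle A₂ A₁ A₃ + nilAngle A₃ A₁ A₂ ≥ π := by
  set u := toE3 (nilT A₁ A₂) with hu
  set v := toE3 (nilT A₂ A₃) with hv
  set w := toE3 (nilT A₃ A₁) with hw
  have hune : u ≠ 0 := toE3_ne_zero (nilT_ne_zero h12)
  have hvne : v ≠ 0 := toE3_ne_zero (nilT_ne_zero h23)
  have hwne : w ≠ 0 := toE3_ne_zero (nilT_ne_zero (Ne.symm h13))
  have e1 : nilAngle A₁ A₂ A₃ = InnerProductGeometry.angle u (-w) := by
    rw [nilAngle_eq, ← hu, show nilT A₁ A₃ = -nilT A₃ A₁ from nilT_neg A₃ A₁, toE3_neg, ← hw]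
  have e2 : nilAngle A₂ A₁ A₃ = InnerProductGeometry.angle (-u) v := by
    rw [nilAngle_eq, ← hv, show nilT A₂ A₁ = -nilT A₁ A₂ from nilT_neg A₁ A₂, toE3_neg, ← hu]
  have e3 : nilAngle A₃ A₁ A₂ = InnerProductGeometry.angle w (-v) := by
    rw [nilAngle_eq, ← hw, show nilT A₃ A₂ = -nilT A₂ A₃ from nilT_neg A₂ A₃, toE3_neg, ← hv]
  rw [e1, e2, e3]
  exact angle_sum_key hune hvne hwne
end
end

section
/- Let A₁, A₂, A₃ be three pairwise distinct points of ℝ³ lying in a Euclidean plane perpendicular to the [x,y] coordinate plane, i.e. suppose there exist real numbers α, β, γ with (α,β) ≠ (0,0) such that α·p₁ + β·p₂ = γ for each vertex P=(p₁,p₂,p₃) ∈ {A₁,A₂,A₃}. Then the interior angle sum of the Nil translation triangle with these vertices equals π: ω(A₁;A₂,A₃) + ω(A₂;A₁,A₃) + ω(A₃;A₁,A₂) = π. -/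
noncomputable section

open Real

open scoped RealInnerProductSpace

def sig (a b : ℝ) (P Q : ℝ × ℝ × ℝ) : ℝ := b * (Q.1 - P.1) - a * (Q.2.1 - P.2.1)

/-- 2D image vector of `nilT P Q`. -/
def vec2 (a b : ℝ) (P Q : ℝ × ℝ × ℝ) : EuclideanSpace ℝ (Fin 2) :=
  WithLp.toLp 2 ![sig a b P Q, (nilT P Q).2.2]

lemma dot_eq (a b : ℝ) (hab : a ^ 2 + b ^ 2 = 1) (P Q R : ℝ × ℝ × ℝ)
    (hQ : a * (Q.1 - P.1) + b * (Q.2.1 - P.2.1) = 0)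
    (hR : a * (R.1 - P.1) + b * (R.2.1 - P.2.1) = 0) :
    dot3 (nilT P Q) (nilT P R)
      = sig a b P Q * sig a b P R + (nilT P Q).2.2 * (nilT P R).2.2 := by
  simp only [dot3, nilT, sig]
  linear_combination (a * (R.1 - P.1) + b * (R.2.1 - P.2.1)) * hQ
    - ((Q.1 - P.1) * (R.1 - P.1) + (Q.2.1 - P.2.1) * (R.2.1 - P.2.1)) * hab

lemma f_add (a b : ℝ) (hab : a ^ 2 + b ^ 2 = 1) (P Q R : ℝ × ℝ × ℝ)
    (hQ : a * (Q.1 - P.1) + b * (Q.2.1 - P.2.1) = 0)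
    (hR : a * (R.1 - P.1) + b * (R.2.1 - P.2.1) = 0) :
    (nilT P Q).2.2 + (nilT Q R).2.2 = (nilT P R).2.2 := by
  simp only [nilT]
  linear_combination (a * (Q.2.1 - P.2.1) / 2 - b * (Q.1 - P.1) / 2) * hR
    + (b * (R.1 - P.1) / 2 - a * (R.2.1 - P.2.1) / 2) * hQ
    - ((R.1 - P.1) * (Q.2.1 - P.2.1) - (Q.1 - P.1) * (R.2.1 - P.2.1)) / 2 * hab

lemma inner_vec2 (a b : ℝ) (hab : a ^ 2 + b ^ 2 = 1) (P Q R : ℝ × ℝ × ℝ)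
    (hQ : a * (Q.1 - P.1) + b * (Q.2.1 - P.2.1) = 0)
    (hR : a * (R.1 - P.1) + b * (R.2.1 - P.2.1) = 0) :
    ⟪vec2 a b P Q, vec2 a b P R⟫ = dot3 (nilT P Q) (nilT P R) := by
  rw [dot_eq a b hab P Q R hQ hR]
  simp [vec2, PiLp.inner_apply, Fin.sum_univ_two]; ring

lemma norm_vec2 (a b : ℝ) (hab : a ^ 2 + b ^ 2 = 1) (P Q : ℝ × ℝ × ℝ)
    (hQ : a * (Q.1 - P.1) + b * (Q.2.1 - P.2.1) = 0) :
    ‖vec2 a b P Q‖ = norm3 (nilT P Q) := by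
  rw [norm3, ← inner_vec2 a b hab P Q Q hQ hQ, real_inner_self_eq_norm_mul_norm,
    Real.sqrt_mul_self (norm_nonneg _)]

lemma angle_eq (a b : ℝ) (hab : a ^ 2 + b ^ 2 = 1) (P Q R : ℝ × ℝ × ℝ)
    (hQ : a * (Q.1 - P.1) + b * (Q.2.1 - P.2.1) = 0)
    (hR : a * (R.1 - P.1) + b * (R.2.1 - P.2.1) = 0) :
    nilAngle P Q R = InnerProductGeometry.angle (vec2 a b P Q) (vec2 a b P R) := by
  rw [nilAngle, InnerProductGeometry.angle, inner_vec2 a b hab P Q R hQ hR,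
    norm_vec2 a b hab P Q hQ, norm_vec2 a b hab P R hR]

lemma vec2_ne_zero (a b : ℝ) (hab : a ^ 2 + b ^ 2 = 1) (P Q : ℝ × ℝ × ℝ)
    (hQ : a * (Q.1 - P.1) + b * (Q.2.1 - P.2.1) = 0) (hPQ : P ≠ Q) :
    vec2 a b P Q ≠ 0 := by
  intro h
  have h0 : sig a b P Q = 0 := by simpa [vec2] using congrArg (fun v : EuclideanSpace ℝ (Fin 2) => v 0) h
  have h1 : (nilT P Q).2.2 = 0 := by simpa [vec2] using congrArg (fun v : EuclideanSpace ℝ (Fin 2) => v 1) h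
  simp only [sig] at h0
  have hd1 : Q.1 - P.1 = 0 := by linear_combination a * hQ + b * h0 - (Q.1 - P.1) * hab
  have hd2 : Q.2.1 - P.2.1 = 0 := by linear_combination b * hQ - a * h0 - (Q.2.1 - P.2.1) * hab
  simp only [nilT] at h1
  apply hPQ
  have : Q.2.2 - P.2.2 = 0 := by linear_combination h1 + P.1 * hd2 + (Q.2.1 - P.2.1) / 2 * hd1
  ext <;> linarith

/-- If the vertices of a Nil translation triangle lie in a Euclidean plane perpendicular to
the `[x,y]` coordinate plane, then the interior angle sum equals π. -/
theorem nil_translation_triangle_vertical_plane_angle_sum_eq_pi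
    (A₁ A₂ A₃ : ℝ × ℝ × ℝ) (h12 : A₁ ≠ A₂) (h13 : A₁ ≠ A₃) (h23 : A₂ ≠ A₃)
    (α β γ : ℝ) (hαβ : (α, β) ≠ (0, 0))
    (hA₁ : α * A₁.1 + β * A₁.2.1 = γ)
    (hA₂ : α * A₂.1 + β * A₂.2.1 = γ)
    (hA₃ : α * A₃.1 + β * A₃.2.1 = γ) :
    nilAngle A₁ A₂ A₃ + nilAngle A₂ A₁ A₃ + nilAngle A₃ A₁ A₂ = π := by
  have hN2 : 0 < α ^ 2 + β ^ 2 := by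
    rcases eq_or_ne α 0 with h | h
    · rcases eq_or_ne β 0 with h' | h'
      · exact absurd (by rw [h, h']) hαβ
      · positivity
    · positivity
  set N := Real.sqrt (α ^ 2 + β ^ 2) with hNdef
  have hN : 0 < N := Real.sqrt_pos.2 hN2
  set a := α / N with hadef
  set b := β / N with hbdef
  have hab : a ^ 2 + b ^ 2 = 1 := by
    rw [hadef, hbdef, div_pow, div_pow, ← add_div, hNdef, Real.sq_sqrt hN2.le,
      div_self hN2.ne']
  have key : ∀ P Q : ℝ × ℝ × ℝ, α * P.1 + β * P.2.1 = γ → α * Q.1 + β * Q.2.1 = γ →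
      a * (Q.1 - P.1) + b * (Q.2.1 - P.2.1) = 0 := by
    intro P Q hP hQ
    rw [hadef, hbdef]
    field_simp
    linear_combination hQ - hP
  have h12' := key A₁ A₂ hA₁ hA₂
  have h13' := key A₁ A₃ hA₁ hA₃
  have h21' := key A₂ A₁ hA₂ hA₁
  have h23' := key A₂ A₃ hA₂ hA₃
  have h31' := key A₃ A₁ hA₃ hA₁
  have h32' := key A₃ A₂ hA₃ hA₂
  set x := vec2 a b A₁ A₂ with hx
  set y := vec2 a b A₁ A₃ with hy
  have hfadd := f_add a b hab A₁ A₂ A₃ h12' h13'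
  have e21 : vec2 a b A₂ A₁ = -x := by
    ext i; fin_cases i
    · simp [hx, vec2, sig]; ring
    · simp [hx, vec2, nilT]; ring
  have e31 : vec2 a b A₃ A₁ = -y := by
    ext i; fin_cases i
    · simp [hy, vec2, sig]; ring
    · simp [hy, vec2, nilT]; ring
  have e23 : vec2 a b A₂ A₃ = y - x := by
    ext i; fin_cases i
    · simp [hx, hy, vec2, sig]; ring
    · simp [hx, hy, vec2]
      linarith [hfadd]
  have e32 : vec2 a b A₃ A₂ = x - y := by
    rw [show x - y = -(vec2 a b A₂ A₃) by rw [e23]; abel]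
    ext i; fin_cases i
    · simp [vec2, sig]; ring
    · simp [vec2, nilT]; ring
  have hxne : x ≠ 0 := vec2_ne_zero a b hab A₁ A₂ h12' h12
  have hyne : y ≠ 0 := vec2_ne_zero a b hab A₁ A₃ h13' h13
  rw [angle_eq a b hab A₁ A₂ A₃ h12' h13', angle_eq a b hab A₂ A₁ A₃ h21' h23',
    angle_eq a b hab A₃ A₁ A₂ h31' h32', e21, e23, e31, e32, ← hx, ← hy,
    show InnerProductGeometry.angle (-x) (y - x)
        = InnerProductGeometry.angle x (x - y) by
      rw [← InnerProductGeometry.angle_neg_neg x (x - y)]; congr 1; abel,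
    show InnerProductGeometry.angle (-y) (x - y)
        = InnerProductGeometry.angle y (y - x) by
      rw [← InnerProductGeometry.angle_neg_neg y (y - x)]; congr 1; abel]
  exact InnerProductGeometry.angle_add_angle_sub_add_angle_sub_eq_pi x hyne
end
end

section
/- Let r > 0. A point (x,y,z) ∈ ℝ³ satisfies the implicit equation x² + y² + (z − xy/2)² = r² if and only if there exist φ ∈ [−π,π] and θ ∈ [−π/2,π/2] such that x = r cos θ cos φ, y = r cos θ sin φ, and z = (r²/2) cos²θ cos φ sin φ + r sin θ. That is, the Nil translation sphere of radius r centered at the origin, parametrized by the longitude φ and altitude θ, coincides with the surface {(x,y,z) : x² + y² + (z − xy/2)² = r²}. -/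
noncomputable section

open Real

/-- The implicit equation of the Nil translation sphere of radius `r` centered at the origin:
a point `(x,y,z)` satisfies `x² + y² + (z - xy/2)² = r²` if and only if it is the endpoint
`γ(r)` of a unit-speed translation curve, i.e. it admits the parametrization by the
longitude `φ ∈ [-π,π]` and altitude `θ ∈ [-π/2,π/2]`. -/
theorem nil_translation_sphere_implicit_eq (r : ℝ) (hr : 0 < r) (x y z : ℝ) :
    x ^ 2 + y ^ 2 + (z - x * y / 2) ^ 2 = r ^ 2 ↔
      ∃ φ ∈ Set.Icc (-Real.pi) Real.pi, ∃ θ ∈ Set.Icc (-(Real.pi / 2)) (Real.pi / 2),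
        x = r * Real.cos θ * Real.cos φ ∧
        y = r * Real.cos θ * Real.sin φ ∧
        z = r ^ 2 / 2 * Real.cos θ ^ 2 * Real.cos φ * Real.sin φ + r * Real.sin θ := by
  have hr' : r ≠ 0 := hr.ne'
  constructor
  · intro h
    set w := z - x * y / 2 with hw
    have hw2 : w ^ 2 ≤ r ^ 2 := by nlinarith [sq_nonneg x, sq_nonneg y]
    have h1 : -1 ≤ w / r := by
      rw [neg_le, ← neg_div, div_le_one hr]
      nlinarith [sq_nonneg (w + r)]
    have h2 : w / r ≤ 1 := by
      rw [div_le_one hr]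
      nlinarith [sq_nonneg (w - r)]
    set θ := Real.arcsin (w / r) with hθ
    have hsin : Real.sin θ = w / r := Real.sin_arcsin h1 h2
    have hrsin : r * Real.sin θ = w := by rw [hsin]; field_simp
    have hcos : Real.cos θ = Real.sqrt (1 - (w / r) ^ 2) := Real.cos_arcsin _
    have hcos' : r * Real.cos θ = Real.sqrt (x ^ 2 + y ^ 2) := by
      rw [hcos, ← Real.sqrt_sq hr.le, ← Real.sqrt_mul (sq_nonneg r)]
      congr 1
      field_simp
      rw [Real.sq_sqrt (sq_nonneg r), ← h]; ring
    by_cases hxy : x = 0 ∧ y = 0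
    · obtain ⟨hx0, hy0⟩ := hxy
      have hc0 : Real.cos θ = 0 := by
        have : r * Real.cos θ = 0 := by
          rw [hcos', hx0, hy0]; simp
        exact (mul_eq_zero.1 this).resolve_left hr'
      refine ⟨0, ⟨by linarith [Real.pi_pos], le_of_lt Real.pi_pos⟩,
        θ, Real.arcsin_mem_Icc _, ?_, ?_, ?_⟩
      · rw [hc0, hx0]; ring
      · rw [hc0, hy0]; simp
      · rw [hc0, hrsin, hw, hx0, hy0]; ring
    · have hs : (0 : ℝ) < Real.sqrt (x ^ 2 + y ^ 2) := by
        rcases not_and_or.1 hxy with hx | hy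
        · exact Real.sqrt_pos.2 (by positivity)
        · exact Real.sqrt_pos.2 (by positivity)
      set c : ℂ := ⟨x, y⟩ with hc
      have hcne : c ≠ 0 := by
        intro hz
        apply hxy
        constructor
        · have := congrArg Complex.re hz; simpa [hc] using this
        · have := congrArg Complex.im hz; simpa [hc] using this
      have habs : ‖c‖ = Real.sqrt (x ^ 2 + y ^ 2) := by
        rw [Complex.norm_def, Complex.normSq_mk]; ring_nf
      have hcosφ : Real.cos c.arg = x / Real.sqrt (x ^ 2 + y ^ 2) := by
        rw [Complex.cos_arg hcne, habs]
      have hsinφ : Real.sin c.arg = y / Real.sqrt (x ^ 2 + y ^ 2) := by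
        rw [Complex.sin_arg, habs]
      have hx : x = r * Real.cos θ * Real.cos c.arg := by
        rw [hcos', hcosφ]; field_simp
      have hy : y = r * Real.cos θ * Real.sin c.arg := by
        rw [hcos', hsinφ]; field_simp
      refine ⟨c.arg, ⟨(Complex.neg_pi_lt_arg c).le, Complex.arg_le_pi c⟩,
        θ, Real.arcsin_mem_Icc _, hx, hy, ?_⟩
      have : r ^ 2 / 2 * Real.cos θ ^ 2 * Real.cos c.arg * Real.sin c.arg
          = x * y / 2 := by rw [hx, hy]; ring
      rw [this, hrsin, hw]; ring
  · rintro ⟨φ, _, θ, _, hx, hy, hz⟩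
    have hs := Real.sin_sq_add_cos_sq θ
    have hs' := Real.sin_sq_add_cos_sq φ
    subst hx hy hz
    linear_combination r ^ 2 * Real.cos θ ^ 2 * hs' + r ^ 2 * hs
end
end

section
/- Let d > 0, A = (0,0,0), B = (0,0,d) in Euclidean 3-space ℝ³, and let α ∈ (0,π). For every point P = (x,y,z) with x² + y² > 0 (i.e. P not on the line AB), the Euclidean angle ∠APB equals α or π − α if and only if (√(x²+y²) − (d/2)|cot α|)² + (z − d/2)² = d²/(4 sin²α) or (√(x²+y²) + (d/2)|cot α|)² + (z − d/2)² = d²/(4 sin²α). In other words, the locus of points from which the segment AB subtends the angle α or π − α is the self-intersecting torus obtained by rotating the two α-isoptic circles of the segment (circles of radius d/(2 sin α) through A and B with centers at distance (d/2)|cot α| from the line AB) about the line AB. -/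
noncomputable section

open Real

/-- The Euclidean angle `∠APB` at `P` between the rays `PA` and `PB`. -/
def eangle (A P B : ℝ × ℝ × ℝ) : ℝ :=
  Real.arccos (dot3 (A - P) (B - P) / (norm3 (A - P) * norm3 (B - P)))

set_option maxHeartbeats 1000000 in
/-- The locus of points in Euclidean 3-space from which the segment from `A = (0,0,0)` to
`B = (0,0,d)` subtends the angle `α` or `π - α` is the self-intersecting torus obtained by
rotating the two `α`-isoptic circles of the segment about the line `AB`. -/
theorem euclidean_isoptic_surface_is_torus (d : ℝ) (hd : 0 < d)
    (α : ℝ) (hα₀ : 0 < α) (hα₁ : α < π) (x y z : ℝ) (hP : 0 < x ^ 2 + y ^ 2) :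
    (eangle (0, 0, 0) (x, y, z) (0, 0, d) = α ∨
     eangle (0, 0, 0) (x, y, z) (0, 0, d) = π - α) ↔
    ((Real.sqrt (x ^ 2 + y ^ 2) - d / 2 * |Real.cot α|) ^ 2 + (z - d / 2) ^ 2
        = d ^ 2 / (4 * Real.sin α ^ 2) ∨
     (Real.sqrt (x ^ 2 + y ^ 2) + d / 2 * |Real.cot α|) ^ 2 + (z - d / 2) ^ 2
        = d ^ 2 / (4 * Real.sin α ^ 2)) := by
  have hs : 0 < Real.sin α := Real.sin_pos_of_pos_of_lt_pi hα₀ hα₁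
  have hsc : Real.cos α ^ 2 + Real.sin α ^ 2 = 1 := by
    rw [add_comm]; exact Real.sin_sq_add_cos_sq α
  set r := Real.sqrt (x ^ 2 + y ^ 2) with hrdef
  have hr2 : r ^ 2 = x ^ 2 + y ^ 2 := Real.sq_sqrt hP.le
  have hrpos : 0 < r := Real.sqrt_pos.mpr hP
  set k := |Real.cot α| with hkdef
  have hcot : k ^ 2 * Real.sin α ^ 2 = Real.cos α ^ 2 := by
    rw [hkdef, sq_abs, Real.cot_eq_cos_div_sin]
    field_simp
  set a := Real.sqrt (x ^ 2 + y ^ 2 + z ^ 2) with hadef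
  set b := Real.sqrt (x ^ 2 + y ^ 2 + (z - d) ^ 2) with hbdef
  have ha2 : a ^ 2 = x ^ 2 + y ^ 2 + z ^ 2 :=
    Real.sq_sqrt (by nlinarith [sq_nonneg z])
  have hb2 : b ^ 2 = x ^ 2 + y ^ 2 + (z - d) ^ 2 :=
    Real.sq_sqrt (by nlinarith [sq_nonneg (z - d)])
  have hapos : 0 < a := Real.sqrt_pos.mpr (by nlinarith [sq_nonneg z])
  have hbpos : 0 < b := Real.sqrt_pos.mpr (by nlinarith [sq_nonneg (z - d)])
  have habpos : 0 < a * b := mul_pos hapos hbpos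
  set D : ℝ := x ^ 2 + y ^ 2 + z ^ 2 - d * z with hDdef
  have habD : (a * b) ^ 2 = D ^ 2 + d ^ 2 * (x ^ 2 + y ^ 2) := by
    rw [mul_pow, ha2, hb2, hDdef]; ring
  -- compute the angle
  have he : eangle (0, 0, 0) (x, y, z) (0, 0, d) = Real.arccos (D / (a * b)) := by
    have h1 : ((0, 0, 0) : ℝ × ℝ × ℝ) - (x, y, z) = (-x, -y, -z) := by
      simp [Prod.ext_iff]
    have h2 : ((0, 0, d) : ℝ × ℝ × ℝ) - (x, y, z) = (-x, -y, d - z) := by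
      simp [Prod.ext_iff]
    rw [eangle, h1, h2]
    have hdot : dot3 (-x, -y, -z) (-x, -y, d - z) = D := by
      simp only [dot3, hDdef]; ring
    have hn1 : norm3 (-x, -y, -z) = a := by
      rw [norm3, hadef]; congr 1; simp only [dot3]; ring
    have hn2 : norm3 (-x, -y, d - z) = b := by
      rw [norm3, hbdef]; congr 1; simp only [dot3]; ring
    rw [hdot, hn1, hn2]
  -- bounds on the cosine
  have hDle : D ^ 2 ≤ (a * b) ^ 2 := by
    have h0 : 0 < d ^ 2 * (x ^ 2 + y ^ 2) := mul_pos (pow_pos hd 2) hP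
    linarith [habD]
  have hDabs : |D| ≤ a * b := by
    rw [← Real.sqrt_sq_eq_abs, ← Real.sqrt_sq habpos.le]
    exact Real.sqrt_le_sqrt hDle
  obtain ⟨hD1, hD2⟩ := abs_le.mp hDabs
  have ht1 : -1 ≤ D / (a * b) := by rw [le_div_iff₀ habpos]; linarith
  have ht2 : D / (a * b) ≤ 1 := by rw [div_le_one habpos]; linarith
  have harc : ∀ β : ℝ, 0 < β → β < π →
      (Real.arccos (D / (a * b)) = β ↔ D / (a * b) = Real.cos β) := by
    intro β h0 h1
    constructor
    · intro h; rw [← h, Real.cos_arccos ht1 ht2]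
    · intro h; rw [h, Real.arccos_cos h0.le h1.le]
  rw [he, harc α hα₀ hα₁, harc (π - α) (by linarith) (by linarith), Real.cos_pi_sub]
  -- left side reduces to the algebraic condition
  have hL : (D / (a * b) = Real.cos α ∨ D / (a * b) = -Real.cos α) ↔
      D ^ 2 * Real.sin α ^ 2 = d ^ 2 * (x ^ 2 + y ^ 2) * Real.cos α ^ 2 := by
    rw [div_eq_iff habpos.ne', div_eq_iff habpos.ne']
    constructor
    · rintro (h | h)
      · have hsq : D ^ 2 = Real.cos α ^ 2 * (a * b) ^ 2 := by rw [h]; ring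
        rw [habD] at hsq
        linear_combination hsq + D ^ 2 * hsc
      · have hsq : D ^ 2 = Real.cos α ^ 2 * (a * b) ^ 2 := by rw [h]; ring
        rw [habD] at hsq
        linear_combination hsq + D ^ 2 * hsc
    · intro h
      have h2 : D ^ 2 = (Real.cos α * (a * b)) ^ 2 := by
        linear_combination h - D ^ 2 * hsc - Real.cos α ^ 2 * habD
      rcases sq_eq_sq_iff_eq_or_eq_neg.mp h2 with h3 | h3
      · left; exact h3
      · right; rw [h3]; ring
  -- right side reduces to the same algebraic condition
  have he1 : ((r - d / 2 * k) ^ 2 + (z - d / 2) ^ 2 = d ^ 2 / (4 * Real.sin α ^ 2)) ↔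
      D = d * r * k := by
    rw [eq_div_iff (by positivity : (4 : ℝ) * Real.sin α ^ 2 ≠ 0)]
    constructor
    · intro h
      have key : Real.sin α ^ 2 * (D - d * r * k) = 0 := by
        linear_combination (1/4) * h + Real.sin α ^ 2 * hDdef - Real.sin α ^ 2 * hr2
          - d ^ 2 / 4 * hcot - d ^ 2 / 4 * hsc
      rcases mul_eq_zero.mp key with h' | h'
      · exact absurd h' (pow_ne_zero 2 hs.ne')
      · linarith
    · intro h
      linear_combination 4 * Real.sin α ^ 2 * h - 4 * Real.sin α ^ 2 * hDdef
        + 4 * Real.sin α ^ 2 * hr2 + d ^ 2 * hcot + d ^ 2 * hsc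
  have he2 : ((r + d / 2 * k) ^ 2 + (z - d / 2) ^ 2 = d ^ 2 / (4 * Real.sin α ^ 2)) ↔
      D = -(d * r * k) := by
    rw [eq_div_iff (by positivity : (4 : ℝ) * Real.sin α ^ 2 ≠ 0)]
    constructor
    · intro h
      have key : Real.sin α ^ 2 * (D + d * r * k) = 0 := by
        linear_combination (1/4) * h + Real.sin α ^ 2 * hDdef - Real.sin α ^ 2 * hr2
          - d ^ 2 / 4 * hcot - d ^ 2 / 4 * hsc
      rcases mul_eq_zero.mp key with h' | h'
      · exact absurd h' (pow_ne_zero 2 hs.ne')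
      · linarith
    · intro h
      linear_combination 4 * Real.sin α ^ 2 * h - 4 * Real.sin α ^ 2 * hDdef
        + 4 * Real.sin α ^ 2 * hr2 + d ^ 2 * hcot + d ^ 2 * hsc
  have hR : (((r - d / 2 * k) ^ 2 + (z - d / 2) ^ 2 = d ^ 2 / (4 * Real.sin α ^ 2)) ∨
      ((r + d / 2 * k) ^ 2 + (z - d / 2) ^ 2 = d ^ 2 / (4 * Real.sin α ^ 2))) ↔
      D ^ 2 * Real.sin α ^ 2 = d ^ 2 * (x ^ 2 + y ^ 2) * Real.cos α ^ 2 := by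
    rw [he1, he2]
    constructor
    · rintro (h | h)
      · linear_combination (D + d * r * k) * Real.sin α ^ 2 * h + d ^ 2 * r ^ 2 * hcot
          + Real.cos α ^ 2 * d ^ 2 * hr2
      · linear_combination (D - d * r * k) * Real.sin α ^ 2 * h + d ^ 2 * r ^ 2 * hcot
          + Real.cos α ^ 2 * d ^ 2 * hr2
    · intro h
      have hss : D ^ 2 * Real.sin α ^ 2 = (d * r * k) ^ 2 * Real.sin α ^ 2 := by
        linear_combination h - d ^ 2 * r ^ 2 * hcot - Real.cos α ^ 2 * d ^ 2 * hr2
      have h2 : D ^ 2 = (d * r * k) ^ 2 :=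
        mul_right_cancel₀ (pow_ne_zero 2 hs.ne') hss
      rcases sq_eq_sq_iff_eq_or_eq_neg.mp h2 with h3 | h3
      · left; exact h3
      · right; exact h3
  rw [hL, hR]
end
end
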